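/- arXiv:1308.0178 — 6 statements merged into one kernel-verified Lean document; each statement's English description precedes it below -/
import Mathlib

section
/- For fixed real M with 0 < M ≤ N and fixed integer N ≥ 1, the function K ↦ K·(1−M/N)·min{(N/(KM))·(1−(1−M/N)^K), N/K}, defined for positive reals K, is concave in K. -/
/-!
For `K > 0` the factor `K` cancels, and with `q = 1 - M/N ∈ [0, 1)` the peak rate becomes
`q · min{(N/M)(1 - q^K), N}`. Since `K ↦ q^K` is convex, `(N/M)(1 - q^K)` is concave; a minimum of
concave functions is concave, and so is its nonnegative multiple.
-/

open Set

-- `0 ^ x = 0` for `x ≠ 0`, so the base `0` is allowed on `Ioi 0` though not on all of `ℝ`.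
theorem convexOn_rpow_left_Ioi {b : ℝ} (hb : 0 ≤ b) :
    ConvexOn ℝ (Ioi 0) fun x : ℝ => b ^ x := by
  rcases hb.eq_or_lt with rfl | hb
  · exact (convexOn_const 0 (convex_Ioi 0)).congr fun x hx => (Real.zero_rpow (ne_of_gt hx)).symm
  · exact (convexOn_rpow_left hb).subset (subset_univ _) (convex_Ioi 0)

theorem concaveOn_min_mul_one_sub_rpow {b c : ℝ} (hb : 0 ≤ b) (hc : 0 ≤ c) (d : ℝ) :
    ConcaveOn ℝ (Ioi 0) fun x : ℝ => min (c * (1 - b ^ x)) d :=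
  (((concaveOn_const 1 (convex_Ioi 0)).sub (convexOn_rpow_left_Ioi hb)).smul hc).inf
    (concaveOn_const d (convex_Ioi 0))

theorem mul_mul_min_div_div {K : ℝ} (hK : 0 < K) (q N M t : ℝ) :
    K * q * min (N / (K * M) * t) (N / K) = q * min (N / M * t) N := by
  rw [show N / (K * M) * t = N / M * t / K by ring, min_div_div_right hK.le]
  field_simp

theorem peak_rate_concave_in_K_general (N : ℕ) (M : ℝ) (hM0 : 0 < M) (hMN : M ≤ N) :
    ConcaveOn ℝ (Set.Ioi (0 : ℝ))
      (fun K : ℝ => K * (1 - M / N) *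
        min ((N / (K * M)) * (1 - (1 - M / N) ^ K)) ((N : ℝ) / K)) := by
  have hN : (0 : ℝ) < N := hM0.trans_le hMN
  have hq : 0 ≤ 1 - M / N := sub_nonneg.2 ((div_le_one hN).2 hMN)
  refine ((concaveOn_min_mul_one_sub_rpow hq (div_nonneg hN.le hM0.le) N).smul hq).congr
    fun K hK => ?_
  exact (mul_mul_min_div_div hK _ _ _ _).symm

/-- For fixed `0 < M ≤ N` (`N ≥ 1` an integer), the peak rate
`K ↦ K(1−M/N)·min{(N/(KM))(1−(1−M/N)^K), N/K}` is concave in the real variable `K > 0`. -/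
theorem peak_rate_concave_in_K (N : ℕ) (hN : 1 ≤ N) (M : ℝ) (hM0 : 0 < M) (hMN : M ≤ N) :
    ConcaveOn ℝ (Set.Ioi (0 : ℝ))
      (fun K : ℝ => K * (1 - M / N) *
        min ((N / (K * M)) * (1 - (1 - M / N) ^ K)) ((N : ℝ) / K)) :=
  peak_rate_concave_in_K_general N M hM0 hMN
end

section
/- Let d₁, …, d_K be i.i.d. random variables, each uniformly distributed on a finite set of size N, and let w denote the number of distinct values among d₁, …, d_K. Then for every s with 1 ≤ s ≤ ⌈min{N,K}/4⌉, the probability that w ≥ s is at least 2/3. -/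
lemma succ_pow_le_aux (t : ℕ) (ht : 1 ≤ t) : (t+1)^t ≤ 4 * t^t := by
  have ht' : (0:ℝ) < t := by exact_mod_cast ht
  have h1 : (1 + 1/(t:ℝ)) ≤ Real.exp (1/t) := by
    have := Real.add_one_le_exp (1/(t:ℝ)); linarith
  have h2 : ((t:ℝ)+1)^t ≤ 4 * t^t := by
    have hpos : (0:ℝ) ≤ 1 + 1/(t:ℝ) := by positivity
    have h3 : (1 + 1/(t:ℝ))^t ≤ Real.exp (1/t) ^ t := pow_le_pow_left₀ hpos h1 t
    have h4 : Real.exp (1/(t:ℝ)) ^ t = Real.exp 1 := by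
      rw [← Real.exp_nat_mul]; congr 1; field_simp
    have h5 : Real.exp 1 ≤ 4 := by
      have := Real.exp_one_lt_d9; linarith
    have heq : ((t:ℝ)+1)^t = t^t * (1 + 1/(t:ℝ))^t := by
      rw [← mul_pow]; congr 1; field_simp
    calc ((t:ℝ)+1)^t = t^t * (1 + 1/(t:ℝ))^t := heq
      _ ≤ t^t * 4 := by
          apply mul_le_mul_of_nonneg_left _ (by positivity)
          calc (1 + 1/(t:ℝ))^t ≤ Real.exp (1/t) ^ t := h3
            _ = Real.exp 1 := h4
            _ ≤ 4 := h5
      _ = 4 * t^t := by ring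
  exact_mod_cast h2

lemma pow_self_le_aux : ∀ t : ℕ, t^t ≤ 4^t * t.factorial := by
  intro t
  induction t with
  | zero => simp
  | succ t ih =>
    rcases Nat.eq_zero_or_pos t with rfl | ht
    · simp [Nat.factorial]
    calc (t+1)^(t+1) = (t+1)^t * (t+1) := by ring
      _ ≤ (4 * t^t) * (t+1) := Nat.mul_le_mul_right _ (succ_pow_le_aux t ht)
      _ ≤ (4 * (4^t * t.factorial)) * (t+1) := Nat.mul_le_mul_right _ (Nat.mul_le_mul_left _ ih)
      _ = 4^(t+1) * (t+1).factorial := by rw [Nat.factorial_succ]; ring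

lemma numeric_aux (N K t : ℕ) (ht : 1 ≤ t) (hN : 4*t < N) (hK : 4*t < K) :
    3 * (N.choose t * t^K) ≤ N^K := by
  set u := K - t with hu
  have hKtu : K = t + u := by omega
  have h1 : N.choose t * t.factorial ≤ N^t := by
    have := Nat.descFactorial_le_pow N t
    rwa [Nat.descFactorial_eq_factorial_mul_choose, Nat.mul_comm] at this
  have h2 : (4*t)^u ≤ N^u := Nat.pow_le_pow_left (by omega) u
  have h3 : 3 * 4^t ≤ 4^u := by
    calc 3 * 4^t ≤ 4 * 4^t := by omega
      _ = 4^(t+1) := by ring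
      _ ≤ 4^u := Nat.pow_le_pow_right (by norm_num) (by omega)
  calc 3 * (N.choose t * t^K) = 3 * N.choose t * (t^t * t^u) := by
        rw [hKtu, pow_add]; ring
    _ ≤ 3 * N.choose t * (4^t * t.factorial * t^u) :=
        Nat.mul_le_mul_left _ (Nat.mul_le_mul_right _ (pow_self_le_aux t))
    _ = (N.choose t * t.factorial) * ((3 * 4^t) * t^u) := by ring
    _ ≤ N^t * (4^u * t^u) := Nat.mul_le_mul h1 (Nat.mul_le_mul_right _ h3)
    _ = N^t * (4*t)^u := by rw [mul_pow]
    _ ≤ N^t * N^u := Nat.mul_le_mul_left _ h2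
    _ = N^K := by rw [hKtu, pow_add]

lemma count_le_aux (N K t : ℕ) (htN : t ≤ N) :
    (Finset.univ.filter
      (fun d : Fin K → Fin N => (Finset.univ.image d).card ≤ t)).card ≤ N.choose t * t^K := by
  classical
  have hsub : (Finset.univ.filter
      (fun d : Fin K → Fin N => (Finset.univ.image d).card ≤ t)) ⊆
      (Finset.powersetCard t (Finset.univ : Finset (Fin N))).biUnion
        (fun A => Fintype.piFinset fun _ : Fin K => A) := by
    intro d hd
    rw [Finset.mem_filter] at hd
    obtain ⟨A, hIA, hAu, hAcard⟩ := Finset.exists_subsuperset_card_eq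
      (Finset.subset_univ (Finset.univ.image d)) hd.2 (by simpa using htN)
    rw [Finset.mem_biUnion]
    refine ⟨A, ?_, ?_⟩
    · rw [Finset.mem_powersetCard_univ]; exact hAcard
    · rw [Fintype.mem_piFinset]
      intro i
      exact hIA (Finset.mem_image_of_mem d (Finset.mem_univ i))
  calc _ ≤ ((Finset.powersetCard t (Finset.univ : Finset (Fin N))).biUnion
        (fun A => Fintype.piFinset fun _ : Fin K => A)).card := Finset.card_le_card hsub
    _ ≤ ∑ A ∈ Finset.powersetCard t (Finset.univ : Finset (Fin N)),
        (Fintype.piFinset fun _ : Fin K => A).card := Finset.card_biUnion_le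
    _ = ∑ A ∈ Finset.powersetCard t (Finset.univ : Finset (Fin N)), t^K := by
        apply Finset.sum_congr rfl
        intro A hA
        rw [Finset.mem_powersetCard_univ] at hA
        rw [Fintype.card_piFinset]
        simp [hA]
    _ = N.choose t * t^K := by
        rw [Finset.sum_const, smul_eq_mul, Finset.card_powersetCard]
        simp

/-- For `K` i.i.d. uniform requests on a set of `N` files, the probability that the number
of distinct requests is at least `s` is at least `2/3`, for `1 ≤ s ≤ ⌈min{N,K}/4⌉`. -/
theorem distinct_requests_prob (N K s : ℕ) (hN : 0 < N) (hK : 0 < K)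
    (hs : 1 ≤ s) (hs' : s ≤ Nat.ceil ((min N K : ℝ) / 4)) :
    (2 : ℝ) / 3 ≤
      ((Finset.univ.filter
          (fun d : Fin K → Fin N => s ≤ (Finset.univ.image d).card)).card : ℝ) / N ^ K := by
  classical
  have hNK : (0:ℝ) < (N:ℝ)^K := by positivity
  rcases eq_or_lt_of_le hs with h1 | h2
  · -- s = 1 : every d has nonempty image
    have hall : (Finset.univ.filter
        (fun d : Fin K → Fin N => s ≤ (Finset.univ.image d).card)) = Finset.univ := by
      apply Finset.filter_true_of_mem
      intro d _
      rw [← h1]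
      have : (Finset.univ.image d).Nonempty := by
        refine ⟨d ⟨0, hK⟩, Finset.mem_image_of_mem d (Finset.mem_univ _)⟩
      exact Finset.card_pos.2 this
    rw [hall, Finset.card_univ]
    have : (Fintype.card (Fin K → Fin N) : ℝ) = (N:ℝ)^K := by
      simp [Fintype.card_fun]
    rw [this, div_self (ne_of_gt hNK)]
    norm_num
  · -- s ≥ 2
    set t := s - 1 with htdef
    have hst : s = t + 1 := by omega
    have ht1 : 1 ≤ t := by omega
    have htlt : (t:ℝ) < (min N K : ℝ) / 4 := by
      have : t < Nat.ceil ((min N K : ℝ) / 4) := by omega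
      exact (Nat.lt_ceil).1 this
    have h4t : 4 * t < min N K := by
      have : (4 * t : ℝ) < (min N K : ℝ) := by push_cast; linarith
      exact_mod_cast this
    have h4tN : 4 * t < N := lt_of_lt_of_le h4t (min_le_left _ _)
    have h4tK : 4 * t < K := lt_of_lt_of_le h4t (min_le_right _ _)
    -- complement counting
    set C := (Finset.univ.filter
        (fun d : Fin K → Fin N => s ≤ (Finset.univ.image d).card)).card with hC
    set B := (Finset.univ.filter
        (fun d : Fin K → Fin N => (Finset.univ.image d).card ≤ t)).card with hB
    have hcompl : C + B = N ^ K := by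
      have := Finset.card_filter_add_card_filter_not
        (s := (Finset.univ : Finset (Fin K → Fin N)))
        (p := fun d => s ≤ (Finset.univ.image d).card)
      rw [Finset.card_univ, Fintype.card_fun, Fintype.card_fin, Fintype.card_fin] at this
      rw [← this, hC, hB]
      congr 2
      apply Finset.filter_congr
      intro d _
      simp only [not_le, hst, eq_iff_iff]
      omega
    have hBle : 3 * B ≤ N ^ K := by
      calc 3 * B ≤ 3 * (N.choose t * t^K) :=
            Nat.mul_le_mul_left _ (count_le_aux N K t (by omega))
        _ ≤ N ^ K := numeric_aux N K t ht1 h4tN h4tK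
    have hBleR : 3 * (B:ℝ) ≤ (N:ℝ)^K := by exact_mod_cast hBle
    have hCR : (C:ℝ) = (N:ℝ)^K - B := by
      have : (C:ℝ) + B = (N:ℝ)^K := by exact_mod_cast hcompl
      linarith
    rw [le_div_iff₀ hNK, hCR]
    linarith
end

section
/- Let z₁, z₂, …, z_{m−1} be independent random variables where zᵢ is geometrically distributed (on {1,2,3,…}) with success probability (N−i+1)/N, and let m = ⌈min{N,K}/4⌉ with N, K positive integers. Then the expectation of z = z₁ + ⋯ + z_{m−1} satisfies E(z) ≤ K/3. -/
open MeasureTheory Finset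
open scoped ENNReal

/-!
Each `zᵢ` with `i ≤ m - 1` has success probability `pᵢ = (N - i + 1)/N > 3/4`, because
`i < min N K / 4 ≤ N / 4`; so `E zᵢ = 1/pᵢ < 4/3`. By linearity the expectation of the sum is
at most `(m - 1) · 4/3`, and `m - 1 ≤ min N K / 4 ≤ K / 4`.
-/

theorem hasSum_succ_mul_geometric_mul {p : ℝ} (hp0 : 0 < p) (hp1 : p ≤ 1) :
    HasSum (fun n : ℕ => ((n : ℝ) + 1) * ((1 - p) ^ n * p)) p⁻¹ := by
  have hr : ‖1 - p‖ < 1 := by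
    rw [Real.norm_eq_abs, abs_of_nonneg (by linarith)]
    linarith
  have h := (hasSum_choose_mul_geometric_of_norm_lt_one 1 hr).mul_right p
  rw [sub_sub_cancel, show 1 / p ^ (1 + 1) * p = p⁻¹ by field_simp] at h
  refine h.congr_fun fun n => ?_
  rw [Nat.choose_one_right]
  push_cast
  ring

section Expectation

variable {Ω : Type*} [MeasurableSpace Ω] {μ : Measure Ω} {X : Ω → ℕ}

theorem lintegral_natCast_eq_tsum (hX : Measurable X) :
    ∫⁻ ω, (X ω : ℝ≥0∞) ∂μ = ∑' n : ℕ, n * μ {ω | X ω = n} := by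
  rw [← lintegral_map (f := fun n : ℕ => (n : ℝ≥0∞)) measurable_from_top hX,
    lintegral_countable']
  refine tsum_congr fun n => ?_
  rw [Measure.map_apply hX (measurableSet_singleton n)]
  rfl

theorem lintegral_natCast_of_geometric (hX : Measurable X) {p : ℝ} (hp0 : 0 < p) (hp1 : p ≤ 1)
    (hgeom : ∀ k : ℕ, 1 ≤ k → μ {ω | X ω = k} = ENNReal.ofReal ((1 - p) ^ (k - 1) * p)) :
    ∫⁻ ω, (X ω : ℝ≥0∞) ∂μ = ENNReal.ofReal p⁻¹ := by
  have hsum := hasSum_succ_mul_geometric_mul hp0 hp1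
  rw [lintegral_natCast_eq_tsum hX, tsum_eq_zero_add' ENNReal.summable, Nat.cast_zero, zero_mul,
    zero_add]
  calc
    _ = ∑' n : ℕ, ENNReal.ofReal (((n : ℝ) + 1) * ((1 - p) ^ n * p)) := by
      refine tsum_congr fun n => ?_
      rw [hgeom (n + 1) (Nat.le_add_left 1 n), Nat.add_sub_cancel, ← ENNReal.ofReal_natCast,
        ← ENNReal.ofReal_mul (by positivity)]
      push_cast
      rfl
    _ = ENNReal.ofReal p⁻¹ := by
      rw [← ENNReal.ofReal_tsum_of_nonneg (fun n =>
        mul_nonneg (by positivity) (mul_nonneg (pow_nonneg (by linarith) n) hp0.le))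
        hsum.summable, hsum.tsum_eq]

theorem integrable_natCast_of_geometric (hX : Measurable X) {p : ℝ} (hp0 : 0 < p) (hp1 : p ≤ 1)
    (hgeom : ∀ k : ℕ, 1 ≤ k → μ {ω | X ω = k} = ENNReal.ofReal ((1 - p) ^ (k - 1) * p)) :
    Integrable (fun ω => (X ω : ℝ)) μ := by
  have h := integrable_toReal_of_lintegral_ne_top (measurable_from_top.comp hX).aemeasurable
    ((lintegral_natCast_of_geometric hX hp0 hp1 hgeom).trans_ne ENNReal.ofReal_ne_top)
  simpa using h

theorem integral_natCast_of_geometric (hX : Measurable X) {p : ℝ} (hp0 : 0 < p) (hp1 : p ≤ 1)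
    (hgeom : ∀ k : ℕ, 1 ≤ k → μ {ω | X ω = k} = ENNReal.ofReal ((1 - p) ^ (k - 1) * p)) :
    ∫ ω, (X ω : ℝ) ∂μ = p⁻¹ := by
  have h := integral_toReal (measurable_from_top.comp hX).aemeasurable
    (ae_of_all μ fun ω => ENNReal.natCast_lt_top (X ω))
  simp only [Function.comp_apply, ENNReal.toReal_natCast] at h
  rw [h, lintegral_natCast_of_geometric hX hp0 hp1 hgeom, ENNReal.toReal_ofReal (by positivity)]

end Expectation

theorem Nat.cast_ceil_sub_one_le {R : Type*} [Ring R] [LinearOrder R] [IsStrictOrderedRing R]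
    [FloorSemiring R] {y : R} (hy : 0 ≤ y) : ((⌈y⌉₊ - 1 : ℕ) : R) ≤ y := by
  rcases Nat.eq_zero_or_pos ⌈y⌉₊ with h | h
  · simpa [h] using hy
  · rw [Nat.cast_sub h, Nat.cast_one, sub_le_iff_le_add]
    exact (Nat.ceil_lt_add_one hy).le

theorem coupon_success_prob_bounds {N i : ℝ} (hi : 1 ≤ i) (hiN : i < N / 4) :
    0 < (N - i + 1) / N ∧ (N - i + 1) / N ≤ 1 ∧ ((N - i + 1) / N)⁻¹ ≤ 4 / 3 := by
  have hN : 0 < N := by linarith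
  have h34 : 3 / 4 ≤ (N - i + 1) / N := by rw [le_div_iff₀ hN]; linarith
  refine ⟨by linarith, by rw [div_le_one hN]; linarith, ?_⟩
  rw [inv_le_comm₀ (by linarith) (by norm_num)]
  linarith

theorem coupon_collector_expectation_general (N K : ℕ)
    {Ω : Type*} [MeasurableSpace Ω] (μ : Measure Ω)
    (z : ℕ → Ω → ℕ) (hmeas : ∀ i, Measurable (z i))
    (m : ℕ) (hm : m = Nat.ceil ((min N K : ℝ) / 4))
    (hgeom : ∀ i ∈ Finset.Icc 1 (m - 1), ∀ k : ℕ, 1 ≤ k →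
      μ {ω | z i ω = k} =
        ENNReal.ofReal
          ((1 - ((N : ℝ) - i + 1) / N) ^ (k - 1) * (((N : ℝ) - i + 1) / N))) :
    ∫ ω, (∑ i ∈ Finset.Icc 1 (m - 1), (z i ω : ℝ)) ∂μ ≤ K / 3 := by
  have hprob : ∀ i ∈ Icc 1 (m - 1),
      0 < ((N : ℝ) - i + 1) / N ∧ ((N : ℝ) - i + 1) / N ≤ 1 ∧ (((N : ℝ) - i + 1) / N)⁻¹ ≤ 4 / 3 := by
    intro i hi
    obtain ⟨hi1, him⟩ := mem_Icc.1 hi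
    have hceil : i + 1 ≤ ⌈(min N K : ℝ) / 4⌉₊ := by omega
    exact coupon_success_prob_bounds (Nat.one_le_cast.2 hi1)
      ((Nat.add_one_le_ceil_iff.1 hceil).trans_le (by gcongr; exact min_le_left _ _))
  rw [integral_finsetSum _ fun i hi =>
    integrable_natCast_of_geometric (hmeas i) (hprob i hi).1 (hprob i hi).2.1 (hgeom i hi)]
  calc ∑ i ∈ Icc 1 (m - 1), ∫ ω, (z i ω : ℝ) ∂μ
      = ∑ i ∈ Icc 1 (m - 1), (((N : ℝ) - i + 1) / N)⁻¹ := sum_congr rfl fun i hi =>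
        integral_natCast_of_geometric (hmeas i) (hprob i hi).1 (hprob i hi).2.1 (hgeom i hi)
    _ ≤ ∑ i ∈ Icc 1 (m - 1), (4 / 3 : ℝ) := sum_le_sum fun i hi => (hprob i hi).2.2
    _ = (m - 1 : ℕ) * (4 / 3) := by simp
    _ ≤ (min N K : ℝ) / 4 * (4 / 3) := by
        gcongr
        exact hm ▸ Nat.cast_ceil_sub_one_le (by positivity)
    _ ≤ K / 3 := by linarith [min_le_right (N : ℝ) K]

/-- If `z₁, …, z_{m−1}` are independent, `zᵢ` geometric on `{1,2,…}` with success probability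
`(N−i+1)/N`, and `m = ⌈min{N,K}/4⌉`, then `E(z₁ + ⋯ + z_{m−1}) ≤ K/3`. -/
theorem coupon_collector_expectation (N K : ℕ) (hN : 0 < N) (hK : 0 < K)
    {Ω : Type*} [MeasurableSpace Ω] (μ : Measure Ω) [IsProbabilityMeasure μ]
    (z : ℕ → Ω → ℕ) (hmeas : ∀ i, Measurable (z i))
    (m : ℕ) (hm : m = Nat.ceil ((min N K : ℝ) / 4))
    (hindep : ProbabilityTheory.iIndepFun z μ)
    (hgeom : ∀ i ∈ Finset.Icc 1 (m - 1), ∀ k : ℕ, 1 ≤ k →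
      μ {ω | z i ω = k} =
        ENNReal.ofReal
          ((1 - ((N : ℝ) - i + 1) / N) ^ (k - 1) * (((N : ℝ) - i + 1) / N))) :
    ∫ ω, (∑ i ∈ Finset.Icc 1 (m - 1), (z i ω : ℝ)) ∂μ ≤ K / 3 :=
  coupon_collector_expectation_general N K μ z hmeas m hm hgeom
end

section
/- Let g : {1, …, m} → ℝ≥0 be defined by g(s) = s·max{1 − M/⌊N/s⌋, 0}, where N ≥ m ≥ 1 are integers and M ≥ 0 is real. Then max over s ∈ {1, …, ⌈m/4⌉} of g(s) is at least (1/4) times max over s ∈ {1, …, m} of g(s). -/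
/-- Restricting `s` to `{1, …, ⌈m/4⌉}` loses at most a factor `4` in
`max_s s·(1 − M/⌊N/s⌋)⁺`. -/
theorem cutset_quarter_restriction (N m : ℕ) (M : ℝ) (hM : 0 ≤ M)
    (hm : 1 ≤ m) (hmN : m ≤ N)
    (h1 : (Finset.Icc 1 (Nat.ceil ((m : ℝ) / 4))).Nonempty)
    (h2 : (Finset.Icc 1 m).Nonempty) :
    (1 / 4 : ℝ) *
        (Finset.Icc 1 m).sup' h2 (fun s => (s : ℝ) * max (1 - M / ((N / s : ℕ) : ℝ)) 0)
      ≤ (Finset.Icc 1 (Nat.ceil ((m : ℝ) / 4))).sup' h1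
          (fun s => (s : ℝ) * max (1 - M / ((N / s : ℕ) : ℝ)) 0) := by
  set f : ℕ → ℝ := fun s => (s : ℝ) * max (1 - M / ((N / s : ℕ) : ℝ)) 0 with hf
  have key : ∀ s ∈ Finset.Icc 1 m,
      f s ≤ 4 * (Finset.Icc 1 (Nat.ceil ((m : ℝ) / 4))).sup' h1 f := by
    intro s hs
    rw [Finset.mem_Icc] at hs
    obtain ⟨hs1, hs2⟩ := hs
    set t := Nat.ceil ((s : ℝ) / 4) with ht
    have hspos : (0 : ℝ) < (s : ℝ) := by exact_mod_cast hs1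
    have ht1 : 1 ≤ t := Nat.one_le_ceil_iff.mpr (by positivity)
    have hts : t ≤ s := by
      have : ((s : ℝ) / 4) ≤ ((s : ℕ) : ℝ) := by linarith
      calc t ≤ Nat.ceil ((s : ℕ) : ℝ) := Nat.ceil_le_ceil this
        _ = s := Nat.ceil_natCast s
    have htm : t ≤ Nat.ceil ((m : ℝ) / 4) := by
      apply Nat.ceil_le_ceil
      gcongr <;> exact_mod_cast hs2
    have hmem : t ∈ Finset.Icc 1 (Nat.ceil ((m : ℝ) / 4)) := Finset.mem_Icc.mpr ⟨ht1, htm⟩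
    have hst : (s : ℝ) ≤ 4 * t := by
      have := Nat.le_ceil ((s : ℝ) / 4)
      rw [← ht] at this
      linarith
    have hdiv : (N / s : ℕ) ≤ (N / t : ℕ) := Nat.div_le_div_left hts ht1
    have hNs : 1 ≤ N / s := (Nat.one_le_div_iff hs1).mpr (le_trans hs2 hmN)
    have hmax : max (1 - M / ((N / s : ℕ) : ℝ)) 0 ≤ max (1 - M / ((N / t : ℕ) : ℝ)) 0 := by
      apply max_le_max _ le_rfl
      have hpos : (0:ℝ) < ((N / s : ℕ) : ℝ) := by
        exact_mod_cast Nat.lt_of_lt_of_le Nat.zero_lt_one hNs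
      gcongr <;> exact_mod_cast hdiv
    have hft : f s ≤ 4 * f t := by
      calc f s ≤ (4 * t) * max (1 - M / ((N / t : ℕ) : ℝ)) 0 :=
            mul_le_mul hst hmax (le_max_right _ _) (by positivity)
        _ = 4 * f t := by simp [hf]; ring
    refine hft.trans ?_
    have : f t ≤ (Finset.Icc 1 (Nat.ceil ((m : ℝ) / 4))).sup' h1 f := Finset.le_sup' f hmem
    linarith
  have h := Finset.sup'_le h2 f key
  linarith
end

section
/- Let N, s, I be positive integers with I = ⌊N/s⌋. Suppose s users, each with cache of size M·F bits, together with I broadcast messages of sizes R₁F, …, R_IF bits, can jointly reconstruct s·I distinct files each of F bits (where for each i, the i-th message together with the caches yields a distinct set of s files). Then, in the limit F → ∞, the rates satisfy ∑_{i=1}^I Rᵢ ≥ s·(I − M)⁺, where (x)⁺ = max{x, 0}. Formally in information-theoretic terms: if H of the cache contents is at most sMF and the total entropy of the messages is at most F·∑Rᵢ, and the sI files (total entropy sIF) are a function of caches and messages up to o(F), then sMF + F∑Rᵢ ≥ sIF − o(F). -/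
open Fintype

section Counting

variable {α β ι : Type*} [Fintype α] [Fintype β] [Fintype ι] {F : ℕ}

theorem two_rpow_mul_card_le_card_of_surjective {f : α → ι → Fin (2 ^ F)}
    (hf : Function.Surjective f) : (2 : ℝ) ^ ((F : ℝ) * card ι) ≤ card α := by
  classical
  have hcard : card (ι → Fin (2 ^ F)) ≤ card α := Fintype.card_le_of_surjective f hf
  rw [card_fun, card_fin, ← pow_mul] at hcard
  rw [← Nat.cast_mul, Real.rpow_natCast]
  exact_mod_cast hcard

theorem mul_card_le_add_of_surjective {a b : ℝ} (ha : (card α : ℝ) ≤ 2 ^ a)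
    (hb : (card β : ℝ) ≤ 2 ^ b) {f : α × β → ι → Fin (2 ^ F)}
    (hf : Function.Surjective f) : (F : ℝ) * card ι ≤ a + b := by
  refine (Real.rpow_le_rpow_left_iff one_lt_two).mp ?_
  calc (2 : ℝ) ^ ((F : ℝ) * card ι)
      ≤ card (α × β) := two_rpow_mul_card_le_card_of_surjective hf
    _ = card α * card β := by rw [card_prod, Nat.cast_mul]
    _ ≤ 2 ^ a * 2 ^ b := mul_le_mul ha hb (Nat.cast_nonneg _) (by positivity)
    _ = 2 ^ (a + b) := (Real.rpow_add two_pos a b).symm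

theorem nonneg_of_card_le_two_rpow [Nonempty β] {b : ℝ} (hb : (card β : ℝ) ≤ 2 ^ b) :
    0 ≤ b := by
  refine (Real.rpow_le_rpow_left_iff one_lt_two).mp ?_
  rw [Real.rpow_zero]
  exact le_trans (by exact_mod_cast card_pos) hb

end Counting

theorem cutset_bound_general (s I F : ℕ)
    (hF : 0 < F) (M : ℝ) (R : ℕ → ℝ)
    (C Msg : Type*) [Fintype C] [Fintype Msg]
    (hC : (Fintype.card C : ℝ) ≤ 2 ^ ((s : ℝ) * M * F))
    (hMsg : (Fintype.card Msg : ℝ) ≤ 2 ^ ((F : ℝ) * ∑ i ∈ Finset.range I, R i))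
    (dec : C × Msg → (Fin (s * I) → Fin (2 ^ F)))
    (hdec : Function.Surjective dec) :
    (s : ℝ) * max ((I : ℝ) - M) 0 ≤ ∑ i ∈ Finset.range I, R i := by
  have hFpos : (0 : ℝ) < F := by exact_mod_cast hF
  have hbits := mul_card_le_add_of_surjective hC hMsg hdec
  rw [card_fin, Nat.cast_mul] at hbits
  have : Nonempty Msg := ⟨(hdec fun _ ↦ 0).choose.2⟩
  have hsum : 0 ≤ ∑ i ∈ Finset.range I, R i :=
    nonneg_of_mul_nonneg_right (nonneg_of_card_le_two_rpow hMsg) hFpos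
  rw [mul_max_of_nonneg _ _ (Nat.cast_nonneg s), mul_zero]
  refine max_le (le_of_mul_le_mul_left ?_ hFpos) hsum
  linarith

/-- Cut-set bound: if cache contents (at most `2^(sMF)` possibilities) together with `I`
messages (at most `2^(F∑Rᵢ)` possibilities) determine `sI` files of `F` bits each, then
`∑ Rᵢ ≥ s(I − M)⁺`. -/
theorem cutset_bound (N s I F : ℕ) (hs : 0 < s) (hsN : s ≤ N) (hI : I = N / s)
    (hF : 0 < F) (M : ℝ) (hM : 0 ≤ M) (R : ℕ → ℝ) (hR : ∀ i, 0 ≤ R i)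
    (C Msg : Type*) [Fintype C] [Fintype Msg]
    (hC : (Fintype.card C : ℝ) ≤ 2 ^ ((s : ℝ) * M * F))
    (hMsg : (Fintype.card Msg : ℝ) ≤ 2 ^ ((F : ℝ) * ∑ i ∈ Finset.range I, R i))
    (dec : C × Msg → (Fin (s * I) → Fin (2 ^ F)))
    (hdec : Function.Surjective dec) :
    (s : ℝ) * max ((I : ℝ) - M) 0 ≤ ∑ i ∈ Finset.range I, R i :=
  cutset_bound_general s I F hF M R C Msg hC hMsg dec hdec
end

section
/- Let N, K be positive integers, M ∈ (0, N], and for s ∈ {1,…,min{N,K}} define g(s) = s·(1 − M/⌊N/s⌋)⁺. Then max_{s} g(s) ≥ (1/12)·R(M,N,K), where R(M,N,K) = K(1−M/N)·min{(N/(KM))(1−(1−M/N)^K), N/K}. -/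
/-- For naturals `b ≤ a` with `b ≥ 1`, natural division `a / b` is at least `a / (2b)` as reals. -/
lemma nat_div_ge_half (a b : ℕ) (hb : 1 ≤ b) (hba : b ≤ a) :
    (a : ℝ) / (2 * b) ≤ ((a / b : ℕ) : ℝ) := by
  have hd : 1 ≤ a / b := (Nat.one_le_div_iff (by omega)).mpr hba
  have hmod : a % b < b := Nat.mod_lt _ (by omega)
  have hdm := Nat.div_add_mod a b
  have hnat : a ≤ 2 * b * (a / b) := by nlinarith [hd, hmod, hdm]
  have hcast : (a : ℝ) ≤ 2 * b * ((a / b : ℕ) : ℝ) := by exact_mod_cast hnat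
  have hbpos : (0 : ℝ) < 2 * b := by positivity
  rw [div_le_iff₀ hbpos]
  nlinarith

lemma key_half (N s : ℕ) (M : ℝ) (hM0 : 0 < M) (h2M : 2 * M ≤ ((N / s : ℕ) : ℝ)) :
    (s : ℝ) / 2 ≤ (s : ℝ) * max (1 - M / ((N / s : ℕ) : ℝ)) 0 := by
  have hdpos : (0 : ℝ) < ((N / s : ℕ) : ℝ) := by linarith
  have hMd : M / ((N / s : ℕ) : ℝ) ≤ 1 / 2 := by
    rw [div_le_iff₀ hdpos]; linarith
  have hmax : (1 : ℝ) / 2 ≤ max (1 - M / ((N / s : ℕ) : ℝ)) 0 :=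
    le_max_of_le_left (by linarith)
  have hs0 : (0 : ℝ) ≤ (s : ℝ) := Nat.cast_nonneg s
  calc (s : ℝ) / 2 = (s : ℝ) * (1 / 2) := by ring
    _ ≤ _ := mul_le_mul_of_nonneg_left hmax hs0

set_option maxHeartbeats 2000000 in
/-- Abstract form: if `R` is bounded by `K(1-M/N)`, `N(1-M/N)` and `(N/M)(1-M/N)`,
then `R/12` is below the cut-set bound. -/
lemma cutset_aux (N K L : ℕ) (hN : 0 < N) (hK : 0 < K) (hL : L = min N K)
    (M R : ℝ) (hM0 : 0 < M) (hMN : M ≤ N)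
    (hRK : R ≤ (K : ℝ) * (1 - M / N)) (hRN : R ≤ (N : ℝ) * (1 - M / N))
    (hRM : R ≤ (N : ℝ) / M * (1 - M / N))
    (h : (Finset.Icc 1 L).Nonempty) :
    (1 / 12 : ℝ) * R ≤ (Finset.Icc 1 L).sup'
      h (fun s => (s : ℝ) * max (1 - M / ((N / s : ℕ) : ℝ)) 0) := by
  have hL1 : 1 ≤ L := hL ▸ le_min hN hK
  have hLN : L ≤ N := hL ▸ min_le_left _ _
  have hNpos : (0 : ℝ) < N := by exact_mod_cast hN
  have hKpos : (0 : ℝ) < K := by exact_mod_cast hK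
  have hLpos : (0 : ℝ) < L := by exact_mod_cast hL1
  have hLNr : (L : ℝ) ≤ N := by exact_mod_cast hLN
  have hq0 : 0 ≤ 1 - M / (N : ℝ) := by
    have : M / N ≤ 1 := by rw [div_le_one hNpos]; exact hMN
    linarith
  have hq1 : 1 - M / (N : ℝ) < 1 := by
    have : 0 < M / (N : ℝ) := div_pos hM0 hNpos
    linarith
  have hRL : R ≤ (L : ℝ) := by
    rcases le_total N K with hc | hc
    · have hLe : (L : ℝ) = N := by rw [hL, min_eq_left hc]
      rw [hLe]
      nlinarith [hRN]
    · have hLe : (L : ℝ) = K := by rw [hL, min_eq_right hc]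
      rw [hLe]
      nlinarith [hRK]
  by_cases h12 : (N : ℝ) ≤ 12 * M
  · -- use s = 1
    have hmem : (1 : ℕ) ∈ Finset.Icc 1 L := Finset.mem_Icc.mpr ⟨le_refl _, hL1⟩
    have hf1 : ((1 : ℕ) : ℝ) * max (1 - M / ((N / 1 : ℕ) : ℝ)) 0 = 1 - M / N := by
      rw [Nat.div_one, Nat.cast_one, one_mul, max_eq_left hq0]
    have hNM : (N : ℝ) / M ≤ 12 := by rw [div_le_iff₀ hM0]; linarith
    have hstep : (1 / 12 : ℝ) * R ≤ 1 - M / N := by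
      have : R ≤ 12 * (1 - M / N) := by
        calc R ≤ (N : ℝ) / M * (1 - M / N) := hRM
          _ ≤ 12 * (1 - M / N) := mul_le_mul_of_nonneg_right hNM hq0
      linarith
    calc (1 / 12 : ℝ) * R ≤ 1 - M / N := hstep
      _ = _ := hf1.symm
      _ ≤ _ := Finset.le_sup' (fun s : ℕ => (s : ℝ) * max (1 - M / ((N / s : ℕ) : ℝ)) 0) hmem
  · push_neg at h12
    by_cases hML : 4 * (L : ℝ) * M ≤ N
    · -- use s = L
      have hmem : L ∈ Finset.Icc 1 L := Finset.mem_Icc.mpr ⟨hL1, le_refl _⟩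
      have hdiv : (N : ℝ) / (2 * L) ≤ ((N / L : ℕ) : ℝ) := nat_div_ge_half N L hL1 hLN
      have h2M : 2 * M ≤ ((N / L : ℕ) : ℝ) := by
        have : 2 * M ≤ (N : ℝ) / (2 * L) := by
          rw [le_div_iff₀ (by positivity)]; nlinarith
        linarith
      have hfL := key_half N L M hM0 h2M
      calc (1 / 12 : ℝ) * R ≤ (1 / 12) * L := by nlinarith [hRL]
        _ ≤ (L : ℝ) / 2 := by nlinarith
        _ ≤ _ := hfL
        _ ≤ _ := Finset.le_sup' (fun s : ℕ => (s : ℝ) * max (1 - M / ((N / s : ℕ) : ℝ)) 0) hmem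
    · -- use s = ⌊N/(4M)⌋
      push_neg at hML
      have hx0 : (0 : ℝ) ≤ (N : ℝ) / (4 * M) := by positivity
      have hs0le : ((⌊(N : ℝ) / (4 * M)⌋₊ : ℕ) : ℝ) ≤ (N : ℝ) / (4 * M) := Nat.floor_le hx0
      have hs0lt : (N : ℝ) / (4 * M) < (⌊(N : ℝ) / (4 * M)⌋₊ : ℕ) + 1 := Nat.lt_floor_add_one _
      set s0 : ℕ := ⌊(N : ℝ) / (4 * M)⌋₊ with hs0def
      clear_value s0
      clear hs0def
      have hx3 : (3 : ℝ) ≤ (N : ℝ) / (4 * M) := by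
        rw [le_div_iff₀ (by positivity)]; linarith
      have hs02 : 2 < s0 := by
        have : (2 : ℝ) < (s0 : ℝ) := by linarith
        exact_mod_cast this
      have hs03 : (3 : ℝ) ≤ (s0 : ℝ) := by exact_mod_cast hs02
      have hs01 : 1 ≤ s0 := by omega
      have h4 : (s0 : ℝ) * (4 * M) ≤ N := by
        rw [← le_div_iff₀ (by positivity : (0:ℝ) < 4 * M)]; exact hs0le
      have hs0Lr : (s0 : ℝ) < L := by
        have h5 : (s0 : ℝ) * (4 * M) < (L : ℝ) * (4 * M) := by
          calc (s0 : ℝ) * (4 * M) ≤ N := h4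
            _ < 4 * (L : ℝ) * M := hML
            _ = (L : ℝ) * (4 * M) := by ring
        exact lt_of_mul_lt_mul_right h5 (by positivity)
      have hs0L : s0 ≤ L := by exact_mod_cast hs0Lr.le
      have hmem : s0 ∈ Finset.Icc 1 L := Finset.mem_Icc.mpr ⟨hs01, hs0L⟩
      have hs0N : s0 ≤ N := le_trans hs0L hLN
      have hs0pos : (0 : ℝ) < s0 := by linarith
      have hdiv : (N : ℝ) / (2 * s0) ≤ ((N / s0 : ℕ) : ℝ) := nat_div_ge_half N s0 hs01 hs0N
      have h2M : 2 * M ≤ ((N / s0 : ℕ) : ℝ) := by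
        have : 2 * M ≤ (N : ℝ) / (2 * s0) := by
          rw [le_div_iff₀ (by positivity)]; nlinarith
        linarith
      have hfs0 := key_half N s0 M hM0 h2M
      have hs0big : (N : ℝ) / (6 * M) ≤ s0 := by
        have h1 : (N : ℝ) / (4 * M) - 1 < s0 := by linarith
        have h3 : 12 * M ≤ (N : ℝ) := by
          rw [le_div_iff₀ (by positivity : (0:ℝ) < 4 * M)] at hx3
          linarith
        have h2 : (N : ℝ) / (6 * M) ≤ (N : ℝ) / (4 * M) - 1 := by
          rw [div_le_iff₀ (by positivity : (0:ℝ) < 6 * M)]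
          have h4 : ((N : ℝ) / (4 * M) - 1) * (6 * M) = (3 / 2) * N - 6 * M := by
            field_simp; ring
          rw [h4]; linarith
        linarith
      have hchain : (1 / 12 : ℝ) * R ≤ (s0 : ℝ) / 2 := by
        have hb1 : (1 / 12 : ℝ) * R ≤ (1 / 12) * ((N : ℝ) / M * (1 - M / N)) := by
          linarith [hRM]
        have hb2 : (N : ℝ) / M * (1 - M / N) ≤ (N : ℝ) / M := by
          nlinarith [div_pos hNpos hM0]
        have hb3 : (1 / 12 : ℝ) * ((N : ℝ) / M) = (1 / 2) * ((N : ℝ) / (6 * M)) := by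
          rw [div_mul_div_comm, div_mul_div_comm, one_mul]
          congr 1
          ring
        nlinarith [hs0big]
      calc (1 / 12 : ℝ) * R ≤ (s0 : ℝ) / 2 := hchain
        _ ≤ _ := hfs0
        _ ≤ _ := Finset.le_sup' (fun s : ℕ => (s : ℝ) * max (1 - M / ((N / s : ℕ) : ℝ)) 0) hmem

/-- The cut-set lower bound `max_{1 ≤ s ≤ min{N,K}} s(1 − M/⌊N/s⌋)⁺` is within a factor `12`
of the peak rate `R(M,N,K)`. -/
theorem cutset_within_factor_twelve (N K : ℕ) (hN : 0 < N) (hK : 0 < K)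
    (M : ℝ) (hM0 : 0 < M) (hMN : M ≤ N)
    (h : (Finset.Icc 1 (min N K)).Nonempty) :
    (1 / 12 : ℝ) *
        ((K : ℝ) * (1 - M / N) *
          min ((N / (K * M)) * (1 - (1 - M / N) ^ K)) ((N : ℝ) / K))
      ≤ (Finset.Icc 1 (min N K)).sup' h
          (fun s => (s : ℝ) * max (1 - M / ((N / s : ℕ) : ℝ)) 0) := by
  have hNpos : (0 : ℝ) < N := by exact_mod_cast hN
  have hKpos : (0 : ℝ) < K := by exact_mod_cast hK
  have hq0 : 0 ≤ 1 - M / (N : ℝ) := by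
    have : M / N ≤ 1 := by rw [div_le_one hNpos]; exact hMN
    linarith
  have hKq0 : 0 ≤ (K : ℝ) * (1 - M / N) := by positivity
  -- Bernoulli
  have hbern : 1 - (K : ℝ) * M / N ≤ (1 - M / N) ^ K := by
    have h2 : (-2 : ℝ) ≤ -(M / N) := by
      have : M / N ≤ 1 := by rw [div_le_one hNpos]; exact hMN
      linarith
    have hb := one_add_mul_le_pow h2 K
    have heq : (1 : ℝ) + -(M / N) = 1 - M / N := by ring
    rw [heq] at hb
    have : (K : ℝ) * -(M / N) = -((K : ℝ) * M / N) := by ring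
    rw [this] at hb
    linarith
  have hA1 : (N : ℝ) / (K * M) * (1 - (1 - M / N) ^ K) ≤ 1 := by
    have h1 : 1 - (1 - M / N) ^ K ≤ (K : ℝ) * M / N := by linarith
    calc (N : ℝ) / (K * M) * (1 - (1 - M / N) ^ K)
        ≤ (N : ℝ) / (K * M) * ((K : ℝ) * M / N) :=
          mul_le_mul_of_nonneg_left h1 (by positivity)
      _ = 1 := by field_simp
  apply cutset_aux N K (min N K) hN hK rfl M _ hM0 hMN _ _ _ h
  · -- R ≤ K (1 - M/N)
    calc (K : ℝ) * (1 - M / N) * min ((N / (K * M)) * (1 - (1 - M / N) ^ K)) ((N : ℝ) / K)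
        ≤ (K : ℝ) * (1 - M / N) * 1 :=
          mul_le_mul_of_nonneg_left (le_trans (min_le_left _ _) hA1) hKq0
      _ = (K : ℝ) * (1 - M / N) := by ring
  · -- R ≤ N (1 - M/N)
    calc (K : ℝ) * (1 - M / N) * min ((N / (K * M)) * (1 - (1 - M / N) ^ K)) ((N : ℝ) / K)
        ≤ (K : ℝ) * (1 - M / N) * ((N : ℝ) / K) :=
          mul_le_mul_of_nonneg_left (min_le_right _ _) hKq0
      _ = (N : ℝ) * (1 - M / N) := by field_simp
  · -- R ≤ (N/M)(1 - M/N)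
    have hAle : (N : ℝ) / (K * M) * (1 - (1 - M / N) ^ K) ≤ (N : ℝ) / (K * M) := by
      have hp : 0 ≤ (1 - M / N) ^ K := pow_nonneg hq0 K
      nlinarith [div_nonneg hNpos.le (by positivity : (0:ℝ) ≤ (K:ℝ) * M)]
    calc (K : ℝ) * (1 - M / N) * min ((N / (K * M)) * (1 - (1 - M / N) ^ K)) ((N : ℝ) / K)
        ≤ (K : ℝ) * (1 - M / N) * ((N : ℝ) / (K * M)) :=
          mul_le_mul_of_nonneg_left (le_trans (min_le_left _ _) hAle) hKq0
      _ = (N : ℝ) / M * (1 - M / N) := by field_simp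
end
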